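/- arXiv:2310.13086 — 4 statements merged into one kernel-verified Lean document; each statement's English description precedes it below -/
import Mathlib

section
/- (Accessible Section Theorem) Let (Ω, F, ℙ) be a probability space with a filtration (F_t)_{t∈ℝ₊} satisfying ⋁_t F_t ⊆ F. For every set A in the accessible σ-algebra 𝒜 and every ε > 0 there exists an accessible time τ such that the graph ⟦τ⟧ is contained in A and ℙ*(π_Ω(A)) − ℙ({τ < ∞}) ≤ ε. -/
open MeasureTheory Set
open scoped NNReal ENNReal


variable {Ω : Type*}

/-- A stopping time with respect to the filtration `𝔽`. -/
def IsStopTime {F : MeasurableSpace Ω} (𝔽 : Filtration ℝ≥0 F) (τ : Ω → ℝ≥0∞) : Prop :=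
  ∀ t : ℝ≥0, MeasurableSet[𝔽 t] {ω | τ ω ≤ (t : ℝ≥0∞)}

/-- A predictable time: a stopping time announced by a nondecreasing sequence of
finite stopping times. -/
def IsPredTime {F : MeasurableSpace Ω} (𝔽 : Filtration ℝ≥0 F) (ρ : Ω → ℝ≥0∞) : Prop :=
  IsStopTime 𝔽 ρ ∧ ∃ ρs : ℕ → Ω → ℝ≥0∞,
    (∀ n, IsStopTime 𝔽 (ρs n)) ∧ (∀ n ω, ρs n ω < ⊤) ∧ (∀ n ω, ρs n ω ≤ ρ ω) ∧
    (∀ n ω, 0 < ρ ω → ρs n ω < ρ ω) ∧ (∀ ω, Monotone fun n => ρs n ω) ∧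
    (∀ ω, Filter.Tendsto (fun n => ρs n ω) Filter.atTop (nhds (ρ ω)))

/-- The graph `⟦τ⟧ ⊆ Ω × ℝ₊` of `τ : Ω → [0,∞]`. -/
def graph (τ : Ω → ℝ≥0∞) : Set (Ω × ℝ≥0) := {p | τ p.1 = (p.2 : ℝ≥0∞)}

/-- The stochastic interval `⟦τ, ∞⟦`. -/
def rayFrom (τ : Ω → ℝ≥0∞) : Set (Ω × ℝ≥0) := {p | τ p.1 ≤ (p.2 : ℝ≥0∞)}

/-- The stochastic interval `⟦ρ, τ⟧`. -/
def stInterval (ρ τ : Ω → ℝ≥0∞) : Set (Ω × ℝ≥0) :=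
  {p | ρ p.1 ≤ (p.2 : ℝ≥0∞) ∧ (p.2 : ℝ≥0∞) ≤ τ p.1}

/-- The predictable σ-algebra on `Ω × ℝ₊`. -/
def predictableSigma {F : MeasurableSpace Ω} (𝔽 : Filtration ℝ≥0 F) :
    MeasurableSpace (Ω × ℝ≥0) :=
  MeasurableSpace.generateFrom {s | ∃ ρ, IsPredTime 𝔽 ρ ∧ s = rayFrom ρ}

/-- The optional σ-algebra on `Ω × ℝ₊`. -/
def optionalSigma {F : MeasurableSpace Ω} (𝔽 : Filtration ℝ≥0 F) :
    MeasurableSpace (Ω × ℝ≥0) :=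
  MeasurableSpace.generateFrom {s | ∃ τ, IsStopTime 𝔽 τ ∧ s = rayFrom τ}

/-- The debut of a set `S ⊆ Ω × ℝ₊`. -/
noncomputable def debut (S : Set (Ω × ℝ≥0)) (ω : Ω) : ℝ≥0∞ :=
  ⨅ (t : ℝ≥0) (_ : (ω, t) ∈ S), (t : ℝ≥0∞)

/-- Projection of a subset of `Ω × ℝ₊` onto `Ω`. -/
def projOmega (S : Set (Ω × ℝ≥0)) : Set Ω := Prod.fst '' S

/-- The outer measure `ℙ*` induced by `ℙ`. -/
noncomputable def pstar {F : MeasurableSpace Ω} (P : Measure Ω) (A : Set Ω) : ℝ≥0∞ :=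
  ⨅ (E : Set Ω) (_ : A ⊆ E) (_ : MeasurableSet E), P E

/-- An accessible stopping time: its graph is covered by countably many graphs of
predictable times. -/
def IsAccessibleTime {Ω : Type*} {F : MeasurableSpace Ω} (𝔽 : Filtration ℝ≥0 F)
    (τ : Ω → ℝ≥0∞) : Prop :=
  IsStopTime 𝔽 τ ∧ ∃ ρs : ℕ → Ω → ℝ≥0∞,
    (∀ m, IsPredTime 𝔽 (ρs m)) ∧ graph τ ⊆ ⋃ m, graph (ρs m)

/-- The accessible σ-algebra on `Ω × ℝ₊`. -/
def accessibleSigma {Ω : Type*} {F : MeasurableSpace Ω} (𝔽 : Filtration ℝ≥0 F) :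
    MeasurableSpace (Ω × ℝ≥0) :=
  MeasurableSpace.generateFrom {s | ∃ τ, IsAccessibleTime 𝔽 τ ∧ s = rayFrom τ}

/-!
Every accessible set is `𝒦`-analytic for the paving `𝒦` of finite unions of intervals `⟦σ, τ⟧`
with `σ` accessible and `τ` a finite stopping time: so are the rays `⟦τ, ∞⟦` of accessible times
and their complements, and `𝒦`-analytic sets are closed under countable unions and
intersections. The map `S ↦ ℙ(π_Ω S)` is a capacity, so by Choquet's theorem `A` contains a
decreasing intersection `⋂ Sₙ` of elements of `𝒦` whose projections have probability at least
`ℙ*(π_Ω A) - ε`. The debut of each `Sₙ` is accessible, and since the sections of the `Sₙ` are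
compact, the supremum of these debuts is an accessible time whose graph lies in `⋂ Sₙ` and which
is finite on `⋂ₙ π_Ω Sₙ`.
-/

open Filter Topology

section Times

variable {F : MeasurableSpace Ω} {𝔽 : Filtration ℝ≥0 F} {σ τ ρ : Ω → ℝ≥0∞}

/-- `ℝ≥0∞` is `WithTop ℝ≥0`, so `IsStopTime` is Mathlib's `IsStoppingTime` for the index `ℝ≥0`;
this gives access to its API, stated for `WithTop`. -/
theorem IsStopTime.isStoppingTime (hτ : IsStopTime 𝔽 τ) : IsStoppingTime 𝔽 τ := hτ

theorem IsStopTime.iSup {d : ℕ → Ω → ℝ≥0∞} (hd : ∀ n, IsStopTime 𝔽 (d n)) :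
    IsStopTime 𝔽 fun ω => ⨆ n, d n ω := fun t => by
  simp only [iSup_le_iff, ofPred_forall]
  exact .iInter fun n => hd n t

theorem IsStopTime.measurableSet_lt_top (hτ : IsStopTime 𝔽 τ) :
    MeasurableSet {ω | τ ω < ⊤} := by
  have : {ω | τ ω < ⊤} = ⋃ n : ℕ, {ω | τ ω ≤ (n : ℝ≥0)} := by
    ext ω
    simp only [mem_ofPred_eq, mem_iUnion, ENNReal.coe_natCast]
    exact ⟨fun h => (ENNReal.exists_nat_gt h.ne).imp fun _ => le_of_lt,
      fun ⟨n, hn⟩ => hn.trans_lt (ENNReal.natCast_lt_top n)⟩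
  rw [this]
  exact .iUnion fun n => 𝔽.le _ _ (hτ n)

open scoped Classical in
noncomputable def restrictTime (σ : Ω → ℝ≥0∞) (B : Set Ω) : Ω → ℝ≥0∞ :=
  B.piecewise σ fun _ => ⊤

theorem restrictTime_of_mem {B : Set Ω} {ω : Ω} (h : ω ∈ B) : restrictTime σ B ω = σ ω := by
  classical exact B.piecewise_eq_of_mem _ _ h

theorem restrictTime_of_notMem {B : Set Ω} {ω : Ω} (h : ω ∉ B) : restrictTime σ B ω = ⊤ := by
  classical exact B.piecewise_eq_of_notMem _ _ h

theorem graph_restrictTime_subset (B : Set Ω) : graph (restrictTime σ B) ⊆ graph σ := by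
  rintro ⟨ω, t⟩ (h : restrictTime σ B ω = t)
  by_cases hω : ω ∈ B
  · rwa [restrictTime_of_mem hω] at h
  · rw [restrictTime_of_notMem hω] at h
    exact absurd h.symm ENNReal.coe_ne_top

theorem IsStopTime.restrictTime (hσ : IsStopTime 𝔽 σ) {B : Set Ω}
    (hB : MeasurableSet[hσ.isStoppingTime.measurableSpace] B) :
    IsStopTime 𝔽 (restrictTime σ B) := by
  intro t
  have : {ω | _root_.restrictTime σ B ω ≤ t} = B ∩ {ω | σ ω ≤ t} := by
    ext ω
    by_cases hω : ω ∈ B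
    · simp [restrictTime_of_mem hω, hω]
    · simp [restrictTime_of_notMem hω, hω]
  rw [this]
  exact hB.2 t

theorem isPredTime_zero : IsPredTime 𝔽 fun _ => 0 :=
  ⟨isStoppingTime_const 𝔽 0, fun _ _ => 0, fun _ => isStoppingTime_const 𝔽 0, by simp, by simp,
    by simp, fun _ => monotone_const, fun _ => tendsto_const_nhds⟩

end Times

section Accessible

variable {F : MeasurableSpace Ω} {𝔽 : Filtration ℝ≥0 F} {σ τ ρ : Ω → ℝ≥0∞}

/-- `IsAccessibleTime 𝔽 τ` unfolds to `IsStopTime 𝔽 τ ∧ IsPredCovered 𝔽 (graph τ)`. -/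
def IsPredCovered (𝔽 : Filtration ℝ≥0 F) (G : Set (Ω × ℝ≥0)) : Prop :=
  ∃ ρs : ℕ → Ω → ℝ≥0∞, (∀ m, IsPredTime 𝔽 (ρs m)) ∧ G ⊆ ⋃ m, graph (ρs m)

theorem IsPredCovered.mono {G H : Set (Ω × ℝ≥0)} (hG : IsPredCovered 𝔽 G) (hHG : H ⊆ G) :
    IsPredCovered 𝔽 H :=
  let ⟨ρs, hρs, hcover⟩ := hG
  ⟨ρs, hρs, hHG.trans hcover⟩

theorem isPredCovered_iUnion {G : ℕ → Set (Ω × ℝ≥0)} (hG : ∀ n, IsPredCovered 𝔽 (G n)) :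
    IsPredCovered 𝔽 (⋃ n, G n) := by
  choose ρs hρs hcover using hG
  refine ⟨fun k => ρs k.unpair.1 k.unpair.2, fun k => hρs _ _, iUnion_subset fun n x hx => ?_⟩
  obtain ⟨m, hm⟩ := mem_iUnion.1 (hcover n hx)
  exact mem_iUnion.2 ⟨Nat.pair n m, by simpa only [Nat.unpair_pair] using hm⟩

theorem IsPredCovered.union {G H : Set (Ω × ℝ≥0)} (hG : IsPredCovered 𝔽 G)
    (hH : IsPredCovered 𝔽 H) : IsPredCovered 𝔽 (G ∪ H) := by
  refine (isPredCovered_iUnion (G := fun n => if n = 0 then G else H) fun n => ?_).mono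
    (union_subset (subset_iUnion_of_subset 0 (by simp)) (subset_iUnion_of_subset 1 (by simp)))
  split_ifs
  exacts [hG, hH]

theorem IsPredTime.isPredCovered_graph (hρ : IsPredTime 𝔽 ρ) : IsPredCovered 𝔽 (graph ρ) :=
  ⟨fun _ => ρ, fun _ => hρ, subset_iUnion (fun _ => graph ρ) 0⟩

theorem IsPredTime.isAccessibleTime (hρ : IsPredTime 𝔽 ρ) : IsAccessibleTime 𝔽 ρ :=
  ⟨hρ.1, hρ.isPredCovered_graph⟩

theorem graph_top : graph (fun _ => ⊤ : Ω → ℝ≥0∞) = ∅ :=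
  eq_empty_of_forall_notMem fun _ h => ENNReal.coe_ne_top (Eq.symm h)

theorem isAccessibleTime_top : IsAccessibleTime 𝔽 fun _ => ⊤ := by
  refine ⟨fun t => ?_, isPredTime_zero.isPredCovered_graph.mono (by simp [graph_top])⟩
  simp

theorem IsAccessibleTime.isPredCovered (hτ : IsAccessibleTime 𝔽 τ) :
    IsPredCovered 𝔽 (graph τ) :=
  hτ.2

theorem graph_min_subset : graph (fun ω => min (σ ω) (τ ω)) ⊆ graph σ ∪ graph τ := by
  rintro ⟨ω, t⟩ (h : min (σ ω) (τ ω) = t)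
  rcases min_choice (σ ω) (τ ω) with hmin | hmin
  exacts [Or.inl (hmin.symm.trans h), Or.inr (hmin.symm.trans h)]

theorem graph_max_subset : graph (fun ω => max (σ ω) (τ ω)) ⊆ graph σ ∪ graph τ := by
  rintro ⟨ω, t⟩ (h : max (σ ω) (τ ω) = t)
  rcases max_choice (σ ω) (τ ω) with hmax | hmax
  exacts [Or.inl (hmax.symm.trans h), Or.inr (hmax.symm.trans h)]

theorem IsAccessibleTime.min (hσ : IsAccessibleTime 𝔽 σ) (hτ : IsAccessibleTime 𝔽 τ) :
    IsAccessibleTime 𝔽 fun ω => min (σ ω) (τ ω) :=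
  ⟨IsStoppingTime.min hσ.1 hτ.1, (hσ.isPredCovered.union hτ.isPredCovered).mono graph_min_subset⟩

theorem IsAccessibleTime.max (hσ : IsAccessibleTime 𝔽 σ) (hτ : IsAccessibleTime 𝔽 τ) :
    IsAccessibleTime 𝔽 fun ω => max (σ ω) (τ ω) :=
  ⟨IsStoppingTime.max hσ.1 hτ.1, (hσ.isPredCovered.union hτ.isPredCovered).mono graph_max_subset⟩

theorem IsAccessibleTime.restrictTime (hσ : IsAccessibleTime 𝔽 σ) {B : Set Ω}
    (hB : MeasurableSet[hσ.1.isStoppingTime.measurableSpace] B) :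
    IsAccessibleTime 𝔽 (restrictTime σ B) :=
  ⟨hσ.1.restrictTime hB, hσ.isPredCovered.mono (graph_restrictTime_subset B)⟩

section iSup

variable {d : ℕ → Ω → ℝ≥0∞}

theorem monotone_restrictTime_lt_iSup (hmono : ∀ ω, Monotone fun n => d n ω) (ω : Ω) :
    Monotone fun k => restrictTime (d k) {ω | d k ω < ⨆ n, d n ω} ω := fun k l hkl => by
  by_cases hl : d l ω < ⨆ n, d n ω
  · have hk : d k ω < ⨆ n, d n ω := (hmono ω hkl).trans_lt hl
    simp only [restrictTime_of_mem (B := {ω | d k ω < ⨆ n, d n ω}) hk,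
      restrictTime_of_mem (B := {ω | d l ω < ⨆ n, d n ω}) hl]
    exact hmono ω hkl
  · simp only [restrictTime_of_notMem (B := {ω | d l ω < ⨆ n, d n ω}) hl, le_top]

theorem iSup_restrictTime_lt_iSup (ω : Ω) :
    ⨆ k, restrictTime (d k) {ω | d k ω < ⨆ n, d n ω} ω =
      restrictTime (fun ω => ⨆ n, d n ω) {ω | ∀ k, d k ω < ⨆ n, d n ω} ω := by
  by_cases hω : ∀ k, d k ω < ⨆ n, d n ω
  · rw [restrictTime_of_mem (B := {ω | ∀ k, d k ω < ⨆ n, d n ω}) hω]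
    exact iSup_congr fun k => restrictTime_of_mem (B := {ω | d k ω < ⨆ n, d n ω}) (hω k)
  · obtain ⟨k, hk⟩ := not_forall.1 hω
    rw [restrictTime_of_notMem (B := {ω | ∀ k, d k ω < ⨆ n, d n ω}) hω]
    exact top_le_iff.1 (le_iSup_of_le k
      (restrictTime_of_notMem (B := {ω | d k ω < ⨆ n, d n ω}) hk).ge)

/-- On the event where the increasing sequence `d` never reaches its limit, the limit is
announced by `min k (d k)`, with `d k` replaced by `∞` once it has reached the limit. -/
theorem isPredTime_restrictTime_iSup (hd : ∀ n, IsStopTime 𝔽 (d n))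
    (hmono : ∀ ω, Monotone fun n => d n ω) :
    IsPredTime 𝔽 (restrictTime (fun ω => ⨆ n, d n ω) {ω | ∀ n, d n ω < ⨆ k, d k ω}) := by
  set D : Ω → ℝ≥0∞ := fun ω => ⨆ n, d n ω
  set B := {ω | ∀ n, d n ω < D ω}
  have hD : IsStopTime 𝔽 D := IsStopTime.iSup hd
  set X : ℕ → Ω → ℝ≥0∞ := fun k => restrictTime (d k) {ω | d k ω < D ω}
  have hX_of_lt {k ω} (h : d k ω < D ω) : X k ω = d k ω := restrictTime_of_mem h
  have hX : ∀ k, IsStopTime 𝔽 (X k) := fun k => by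
    have hlt : {ω | d k ω < D ω} = {ω | D ω ≤ d k ω}ᶜ := by ext; simp
    refine (hd k).restrictTime ?_
    rw [hlt]
    exact (hD.isStoppingTime.measurableSet_stopping_time_le (hd k).isStoppingTime).compl
  have hX_lt {k ω} (hω : ω ∈ B) : X k ω < restrictTime D B ω := by
    rw [hX_of_lt (hω k), restrictTime_of_mem hω]
    exact hω k
  have hX_le k ω : X k ω ≤ restrictTime D B ω := by
    by_cases hω : ω ∈ B
    · exact (hX_lt hω).le
    · simp only [restrictTime_of_notMem hω, le_top]
  refine ⟨hD.restrictTime ?_, fun k ω => min ((k : ℝ≥0) : ℝ≥0∞) (X k ω),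
    fun k => IsStoppingTime.min (isStoppingTime_const 𝔽 (k : ℝ≥0)) (hX k),
    fun k ω => min_lt_of_left_lt ENNReal.coe_lt_top,
    fun k ω => min_le_of_right_le (hX_le k ω), fun k ω _ => ?_,
    fun ω => Monotone.min (fun k l hkl => by exact_mod_cast hkl)
      (monotone_restrictTime_lt_iSup hmono ω), fun ω => ?_⟩
  · have hB : B = ⋂ n, {ω | D ω ≤ d n ω}ᶜ := by ext; simp [B]
    rw [hB]
    exact .iInter fun n =>
      (hD.isStoppingTime.measurableSet_le_stopping_time (hd n).isStoppingTime).compl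
  · by_cases hω : ω ∈ B
    · exact min_lt_of_right_lt (hX_lt hω)
    · exact min_lt_of_left_lt (by simp [restrictTime_of_notMem hω])
  · have hk : Tendsto (fun k : ℕ => ((k : ℝ≥0) : ℝ≥0∞)) atTop (𝓝 ⊤) := by
      simpa using ENNReal.tendsto_nat_nhds_top
    simpa [iSup_restrictTime_lt_iSup] using
      hk.min (tendsto_atTop_iSup (monotone_restrictTime_lt_iSup hmono ω))

theorem IsAccessibleTime.iSup (hd : ∀ n, IsAccessibleTime 𝔽 (d n))
    (hmono : ∀ ω, Monotone fun n => d n ω) : IsAccessibleTime 𝔽 fun ω => ⨆ n, d n ω := by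
  set D : Ω → ℝ≥0∞ := fun ω => ⨆ n, d n ω
  set B := {ω | ∀ n, d n ω < D ω}
  have hcover : graph D ⊆ graph (_root_.restrictTime D B) ∪ ⋃ n, graph (d n) := by
    rintro ⟨ω, t⟩ (h : D ω = t)
    by_cases hω : ω ∈ B
    · exact Or.inl ((restrictTime_of_mem hω).trans h)
    · obtain ⟨n, hn⟩ : ∃ n, ¬ d n ω < D ω := by simpa [B] using hω
      exact Or.inr (mem_iUnion.2 ⟨n, (le_antisymm (le_iSup (d · ω) n) (not_lt.1 hn)).trans h⟩)
  exact ⟨IsStopTime.iSup fun n => (hd n).1,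
    ((isPredTime_restrictTime_iSup (fun n => (hd n).1) hmono).isPredCovered_graph.union
      (isPredCovered_iUnion fun n => (hd n).isPredCovered)).mono hcover⟩

end iSup

end Accessible

section Debut

variable {S T : Set (Ω × ℝ≥0)} {σ τ : Ω → ℝ≥0∞} {ω : Ω}

theorem debut_le {t : ℝ≥0} (h : (ω, t) ∈ S) : debut S ω ≤ t := iInf₂_le t h

theorem debut_anti (h : S ⊆ T) : debut T ω ≤ debut S ω := le_iInf₂ fun _ ht => debut_le (h ht)

theorem debut_lt_top_iff : debut S ω < ⊤ ↔ ω ∈ projOmega S := by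
  refine ⟨fun h => ?_, ?_⟩
  · by_contra hω
    exact h.ne (le_antisymm le_top (le_iInf₂ fun t ht => absurd ⟨_, ht, rfl⟩ hω))
  · rintro ⟨⟨_, t⟩, ht, rfl⟩
    exact (debut_le ht).trans_lt ENNReal.coe_lt_top

theorem projOmega_eq_setOf_debut_lt_top : projOmega S = {ω | debut S ω < ⊤} :=
  (Set.ext fun _ => debut_lt_top_iff).symm

theorem mem_of_debut_eq {t : ℝ≥0} (hS : IsClosed (Prod.mk ω ⁻¹' S)) (h : debut S ω = t) :
    (ω, t) ∈ S := by
  have hne : (Prod.mk ω ⁻¹' S).Nonempty := by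
    obtain ⟨⟨_, s⟩, hs, rfl⟩ := debut_lt_top_iff.1 (h ▸ ENNReal.coe_lt_top)
    exact ⟨s, hs⟩
  have hinf : debut S ω = (sInf (Prod.mk ω ⁻¹' S) : ℝ≥0) := (ENNReal.coe_sInf hne).symm
  rw [h, ENNReal.coe_inj] at hinf
  exact hinf ▸ hS.csInf_mem hne (OrderBot.bddBelow _)

theorem debut_empty : debut (∅ : Set (Ω × ℝ≥0)) = fun _ => ⊤ := by
  ext ω
  simp [debut]

theorem debut_union : debut (S ∪ T) = fun ω => min (debut S ω) (debut T ω) := by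
  ext ω
  simp only [debut, mem_union, iInf_or, iInf_inf_eq]

theorem debut_stInterval : debut (stInterval σ τ) = restrictTime σ {ω | σ ω ≤ τ ω} := by
  ext ω
  by_cases hω : σ ω ≤ τ ω
  · rw [restrictTime_of_mem (B := {ω | σ ω ≤ τ ω}) hω]
    refine le_antisymm ?_ (le_iInf₂ fun t ht => ht.1)
    obtain hσ | hσ := eq_or_ne (σ ω) ⊤
    · exact hσ ▸ le_top
    · obtain ⟨s, hs⟩ := WithTop.ne_top_iff_exists.1 hσ
      exact hs ▸ debut_le (show (ω, s) ∈ stInterval σ τ from ⟨hs.ge, hs.trans_le hω⟩)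
  · rw [restrictTime_of_notMem (B := {ω | σ ω ≤ τ ω}) hω]
    exact le_antisymm le_top (le_iInf₂ fun t ht => absurd (ht.1.trans ht.2) hω)

end Debut

section Paving

variable {F : MeasurableSpace Ω} {𝔽 : Filtration ℝ≥0 F} {S T : Set (Ω × ℝ≥0)}

inductive AccessiblePaving (𝔽 : Filtration ℝ≥0 F) : Set (Set (Ω × ℝ≥0))
  | empty : AccessiblePaving 𝔽 ∅
  | union_stInterval {σ τ : Ω → ℝ≥0∞} {S : Set (Ω × ℝ≥0)} :
      IsAccessibleTime 𝔽 σ → IsStopTime 𝔽 τ → (∀ ω, τ ω ≠ ⊤) → AccessiblePaving 𝔽 S →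
      AccessiblePaving 𝔽 (stInterval σ τ ∪ S)

namespace AccessiblePaving

theorem stInterval_mem {σ τ : Ω → ℝ≥0∞} (hσ : IsAccessibleTime 𝔽 σ) (hτ : IsStopTime 𝔽 τ)
    (hτ_fin : ∀ ω, τ ω ≠ ⊤) : stInterval σ τ ∈ AccessiblePaving 𝔽 := by
  have h := union_stInterval hσ hτ hτ_fin empty
  rw [union_empty] at h
  exact h

theorem union_mem (hS : S ∈ AccessiblePaving 𝔽) (hT : T ∈ AccessiblePaving 𝔽) :
    S ∪ T ∈ AccessiblePaving 𝔽 := by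
  induction hS with
  | empty => simpa using hT
  | union_stInterval hσ hτ hτ_fin _ ih =>
    rw [union_assoc]
    exact union_stInterval hσ hτ hτ_fin ih

theorem stInterval_inter (σ τ σ' τ' : Ω → ℝ≥0∞) :
    stInterval σ τ ∩ stInterval σ' τ' =
      stInterval (fun ω => max (σ ω) (σ' ω)) (fun ω => min (τ ω) (τ' ω)) := by
  ext
  simp only [stInterval, mem_inter_iff, mem_ofPred_eq, max_le_iff, le_min_iff]
  tauto

theorem stInterval_inter_mem {σ τ : Ω → ℝ≥0∞} (hσ : IsAccessibleTime 𝔽 σ)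
    (hτ : IsStopTime 𝔽 τ) (hτ_fin : ∀ ω, τ ω ≠ ⊤) (hT : T ∈ AccessiblePaving 𝔽) :
    stInterval σ τ ∩ T ∈ AccessiblePaving 𝔽 := by
  induction hT with
  | empty =>
    rw [inter_empty]
    exact empty
  | union_stInterval hσ' hτ' _ _ ih =>
    rw [inter_union_distrib_left, stInterval_inter]
    exact union_stInterval (hσ.max hσ') (IsStoppingTime.min hτ hτ')
      (fun ω => (min_le_left _ _).trans_lt (hτ_fin ω).lt_top |>.ne) ih

theorem inter_mem (hS : S ∈ AccessiblePaving 𝔽) (hT : T ∈ AccessiblePaving 𝔽) :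
    S ∩ T ∈ AccessiblePaving 𝔽 := by
  induction hS with
  | empty =>
    rw [empty_inter]
    exact empty
  | union_stInterval hσ hτ hτ_fin _ ih =>
    rw [union_inter_distrib_right]
    exact union_mem (stInterval_inter_mem hσ hτ hτ_fin hT) ih

theorem isAccessibleTime_debut (hS : S ∈ AccessiblePaving 𝔽) :
    IsAccessibleTime 𝔽 (debut S) := by
  induction hS with
  | empty =>
    rw [debut_empty]
    exact isAccessibleTime_top
  | @union_stInterval σ τ _ hσ hτ _ _ ih =>
    rw [debut_union, debut_stInterval]
    exact (hσ.restrictTime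
      (hσ.1.isStoppingTime.measurableSet_le_stopping_time hτ.isStoppingTime)).min ih

theorem isCompact_section (hS : S ∈ AccessiblePaving 𝔽) (ω : Ω) :
    IsCompact (Prod.mk ω ⁻¹' S) := by
  induction hS with
  | empty => simp
  | @union_stInterval σ τ _ _ _ hτ_fin _ ih =>
    have hclosed : IsClosed ((↑) ⁻¹' Icc (σ ω) (τ ω) : Set ℝ≥0) :=
      isClosed_Icc.preimage ENNReal.continuous_coe
    have hcompact : IsCompact (Prod.mk ω ⁻¹' stInterval σ τ) :=
      (isCompact_Icc (a := 0) (b := (τ ω).toNNReal)).of_isClosed_subset hclosed fun t ht =>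
        ⟨zero_le, ENNReal.coe_le_coe.1 (ht.2.trans_eq (ENNReal.coe_toNNReal (hτ_fin ω)).symm)⟩
    exact hcompact.union ih

theorem graph_debut_subset (hS : S ∈ AccessiblePaving 𝔽) : graph (debut S) ⊆ S :=
  fun ⟨ω, _⟩ h => mem_of_debut_eq (isCompact_section hS ω).isClosed h

theorem measurableSet_projOmega (hS : S ∈ AccessiblePaving 𝔽) : MeasurableSet (projOmega S) :=
  projOmega_eq_setOf_debut_lt_top ▸ (isAccessibleTime_debut hS).1.measurableSet_lt_top

end AccessiblePaving

end Paving

/-- The supremum of the debuts is an exact section: by compactness of the sections, the limit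
of the points `(ω, debut (S n) ω) ∈ S n ⊆ S m` stays in every `S m`. -/
theorem exists_isAccessibleTime_graph_subset_iInter {F : MeasurableSpace Ω}
    {𝔽 : Filtration ℝ≥0 F} {S : ℕ → Set (Ω × ℝ≥0)} (hS : ∀ n, S n ∈ AccessiblePaving 𝔽)
    (hanti : Antitone S) :
    ∃ τ, IsAccessibleTime 𝔽 τ ∧ graph τ ⊆ ⋂ n, S n ∧ ⋂ n, projOmega (S n) ⊆ {ω | τ ω < ⊤} := by
  have hmono ω : Monotone fun n => debut (S n) ω := fun _ _ hkl => debut_anti (hanti hkl)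
  refine ⟨fun ω => ⨆ n, debut (S n) ω,
    .iSup (fun n => AccessiblePaving.isAccessibleTime_debut (hS n)) hmono, ?_, fun ω hω => ?_⟩
  · rintro ⟨ω, t⟩ (h : ⨆ n, debut (S n) ω = t)
    have he n : ((debut (S n) ω).toNNReal : ℝ≥0∞) = debut (S n) ω :=
      ENNReal.coe_toNNReal ((h ▸ le_iSup (fun n => debut (S n) ω) n).trans_lt ENNReal.coe_lt_top).ne
    have hmem n : (ω, (debut (S n) ω).toNNReal) ∈ S n :=
      AccessiblePaving.graph_debut_subset (hS n) (he n).symm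
    have htend : Tendsto (fun n => (debut (S n) ω).toNNReal) atTop (𝓝 t) := by
      rw [← ENNReal.tendsto_coe, ← h]
      simpa only [he] using tendsto_atTop_iSup (hmono ω)
    exact mem_iInter.2 fun m => (AccessiblePaving.isCompact_section (hS m) ω).isClosed
      |>.mem_of_tendsto htend (eventually_atTop.2 ⟨m, fun n hn => hanti hn (hmem n)⟩)
  · obtain ⟨b, hb⟩ := (AccessiblePaving.isCompact_section (hS 0) ω).bddAbove
    refine (iSup_le fun n => ?_).trans_lt (ENNReal.coe_lt_top (r := b))
    obtain ⟨⟨_, s⟩, hs, rfl⟩ := mem_iInter.1 hω n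
    exact (debut_le hs).trans (ENNReal.coe_le_coe.2 (hb (hanti (Nat.zero_le n) hs)))

section Suslin

variable {α : Type*} {𝒦 : Set (Set α)}

/-- Choquet's `𝒦`-analytic sets, obtained from `𝒦` by Suslin's operation. -/
def IsSuslin (𝒦 : Set (Set α)) (X : Set α) : Prop :=
  ∃ C : (ℕ → ℕ) → ℕ → Set α, (∀ f n, C f n ∈ 𝒦) ∧
    (∀ f g n, (∀ i ≤ n, f i = g i) → C f n = C g n) ∧
    (∀ f n, C f (n + 1) ⊆ C f n) ∧ X = ⋃ f, ⋂ n, C f n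

theorem biInter_range_succ_mem (hinter : ∀ s ∈ 𝒦, ∀ t ∈ 𝒦, s ∩ t ∈ 𝒦) {s : ℕ → Set α}
    (hs : ∀ k, s k ∈ 𝒦) (n : ℕ) : ⋂ k ∈ Finset.range (n + 1), s k ∈ 𝒦 := by
  induction n with
  | zero => simpa using hs 0
  | succ n ih =>
    rw [Finset.range_add_one, Finset.set_biInter_insert]
    exact hinter _ (hs _) _ ih

namespace IsSuslin

theorem of_mem {s : Set α} (hs : s ∈ 𝒦) : IsSuslin 𝒦 s :=
  ⟨fun _ _ => s, fun _ _ => hs, fun _ _ _ _ => rfl, fun _ _ => subset_rfl,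
    by simp only [iInter_const, iUnion_const]⟩

theorem iUnion_nat {X : ℕ → Set α} (hX : ∀ i, IsSuslin 𝒦 (X i)) : IsSuslin 𝒦 (⋃ i, X i) := by
  choose C hC𝒦 hCprefix hCanti hX using hX
  -- `f 0` encodes both the index `i` and the first coordinate of a branch of `C i`
  let branch (f : ℕ → ℕ) : ℕ → ℕ := Function.update f 0 (f 0).unpair.2
  refine ⟨fun f => C (f 0).unpair.1 (branch f), fun f n => hC𝒦 _ _ _, fun f g n hfg => ?_,
    fun f n => hCanti _ _ n, ?_⟩
  · have h0 : f 0 = g 0 := hfg 0 (Nat.zero_le n)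
    simp only [h0]
    refine hCprefix _ _ _ _ fun i hi => ?_
    rcases eq_or_ne i 0 with rfl | hi0
    · simp [branch, h0]
    · simp [branch, Function.update_of_ne hi0, hfg i hi]
  · ext x
    simp only [mem_iUnion, hX]
    constructor
    · rintro ⟨i, f, hf⟩
      exact ⟨Function.update f 0 (Nat.pair i (f 0)), by simpa [branch] using hf⟩
    · rintro ⟨f, hf⟩
      exact ⟨_, branch f, hf⟩

theorem iUnion {ι : Type*} [Countable ι] [Nonempty ι] {X : ι → Set α}
    (hX : ∀ i, IsSuslin 𝒦 (X i)) : IsSuslin 𝒦 (⋃ i, X i) := by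
  obtain ⟨g, hg⟩ := exists_surjective_nat ι
  rw [← hg.iUnion_comp]
  exact iUnion_nat fun n => hX (g n)

theorem union {s t : Set α} (hs : IsSuslin 𝒦 s) (ht : IsSuslin 𝒦 t) : IsSuslin 𝒦 (s ∪ t) := by
  rw [union_eq_iUnion]
  exact iUnion fun b => by cases b <;> assumption

theorem iInter_nat (hinter : ∀ s ∈ 𝒦, ∀ t ∈ 𝒦, s ∩ t ∈ 𝒦) {X : ℕ → Set α}
    (hX : ∀ i, IsSuslin 𝒦 (X i)) : IsSuslin 𝒦 (⋂ i, X i) := by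
  choose C hC𝒦 hCprefix hCanti hX using hX
  -- the coordinates `f (pair i m)` form a branch of `C i`; stage `n` collects the levels
  -- `k.unpair.2` of `C k.unpair.1` for all `k ≤ n`
  let branch (f : ℕ → ℕ) (i : ℕ) : ℕ → ℕ := fun m => f (Nat.pair i m)
  refine ⟨fun f n => ⋂ k ∈ Finset.range (n + 1), C k.unpair.1 (branch f k.unpair.1) k.unpair.2,
    fun f n => biInter_range_succ_mem hinter (fun k => hC𝒦 _ _ _) n,
    fun f g n hfg => iInter₂_congr fun k hk => hCprefix _ _ _ _ fun m hm => hfg _ ?_,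
    fun f n => biInter_subset_biInter_left (by simp), ?_⟩
  · calc Nat.pair k.unpair.1 m ≤ Nat.pair k.unpair.1 k.unpair.2 :=
          (StrictMono.monotone fun _ _ => Nat.pair_lt_pair_right _) hm
      _ ≤ n := by simpa [Nat.lt_succ_iff] using hk
  · ext x
    simp only [mem_iInter, mem_iUnion, hX]
    constructor
    · intro h
      choose g hg using h
      refine ⟨fun k => g k.unpair.1 k.unpair.2, fun n k _ => ?_⟩
      simpa [branch] using hg k.unpair.1 k.unpair.2
    · rintro ⟨f, hf⟩ i
      exact ⟨branch f i, fun m => by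
        simpa using hf (Nat.pair i m) (Nat.pair i m) (Finset.self_mem_range_succ _)⟩

end IsSuslin

end Suslin

section Choquet

variable {α : Type*} {𝒦 : Set (Set α)} {C : (ℕ → ℕ) → ℕ → Set α}

theorem sUnion_mem_of_finite (hempty : ∅ ∈ 𝒦) (hunion : ∀ s ∈ 𝒦, ∀ t ∈ 𝒦, s ∪ t ∈ 𝒦)
    {𝒮 : Set (Set α)} (h𝒮 : 𝒮.Finite) (hsub : 𝒮 ⊆ 𝒦) : ⋃₀ 𝒮 ∈ 𝒦 := by
  induction 𝒮, h𝒮 using Set.Finite.induction_on with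
  | empty => simpa using hempty
  | insert _ _ ih =>
    rw [sUnion_insert]
    exact hunion _ (hsub (mem_insert _ _)) _ (ih ((subset_insert _ _).trans hsub))

theorem exists_eq_comp_prefix (hC : ∀ f g n, (∀ i ≤ n, f i = g i) → C f n = C g n) (k : ℕ) :
    ∃ c : (Fin (k + 1) → ℕ) → Set α, ∀ f, C f k = c fun i => f i :=
  ⟨fun v => C (fun i => if h : i < k + 1 then v ⟨i, h⟩ else 0) k,
    fun f => hC _ _ _ fun i hi => by simp [Nat.lt_succ_of_le hi]⟩

theorem biUnion_mem_of_subset_bounded (hempty : ∅ ∈ 𝒦)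
    (hunion : ∀ s ∈ 𝒦, ∀ t ∈ 𝒦, s ∪ t ∈ 𝒦) (hC𝒦 : ∀ f n, C f n ∈ 𝒦)
    (hC : ∀ f g n, (∀ i ≤ n, f i = g i) → C f n = C g n) (m : ℕ → ℕ) (k : ℕ)
    {Φ : Set (ℕ → ℕ)} (hΦ : Φ ⊆ {f | ∀ i ≤ k, f i ≤ m i}) : ⋃ f ∈ Φ, C f k ∈ 𝒦 := by
  obtain ⟨c, hc⟩ := exists_eq_comp_prefix hC k
  rw [← sUnion_image]
  have hfin : (univ.pi fun i : Fin (k + 1) => Iic (m i)).Finite := .pi fun _ => finite_Iic _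
  refine sUnion_mem_of_finite hempty hunion ((hfin.image c).subset ?_)
    (image_subset_iff.2 fun f _ => hC𝒦 f k)
  rintro _ ⟨f, hf, rfl⟩
  exact ⟨fun i => f i, fun i _ => hΦ hf i (Nat.lt_succ_iff.1 i.2), (hc f).symm⟩

/-- König's lemma, by compactness of `{f | f ≤ m}` in `ℕ → ℕ`. -/
theorem exists_forall_mem_of_forall_exists_bounded
    (hC : ∀ f g n, (∀ i ≤ n, f i = g i) → C f n = C g n) (hanti : ∀ f n, C f (n + 1) ⊆ C f n)
    (m : ℕ → ℕ) {x : α} (hx : ∀ k, ∃ f, (∀ i ≤ k, f i ≤ m i) ∧ x ∈ C f k) :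
    ∃ f, ∀ n, x ∈ C f n := by
  set B : Set (ℕ → ℕ) := univ.pi fun i => Iic (m i)
  have hB : IsCompact B := isCompact_univ_pi fun i => (finite_Iic (m i)).isCompact
  have hclosed k : IsClosed (B ∩ {f | x ∈ C f k}) := by
    obtain ⟨c, hc⟩ := exists_eq_comp_prefix hC k
    have hpre : {f | x ∈ C f k} = (fun f (i : Fin (k + 1)) => f i) ⁻¹' {v | x ∈ c v} := by
      ext f
      simp [hc]
    exact hB.isClosed.inter (hpre ▸ (isClosed_discrete _).preimage (by fun_prop))
  have hne k : (B ∩ {f | x ∈ C f k}).Nonempty := by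
    obtain ⟨f, hfm, hxf⟩ := hx k
    refine ⟨fun i => if i ≤ k then f i else 0, fun i _ => ?_, ?_⟩
    · simp only [mem_Iic]
      split_ifs with hi
      exacts [hfm i hi, zero_le]
    · rwa [mem_ofPred_eq, hC _ f k fun i hi => if_pos hi]
  obtain ⟨f, hf⟩ := IsCompact.nonempty_iInter_of_sequence_nonempty_isCompact_isClosed _
    (fun k => inter_subset_inter_right _ fun f hf => hanti f k hf) hne
    (hB.of_isClosed_subset (hclosed 0) inter_subset_left) hclosed
  exact ⟨f, fun n => (mem_iInter.1 hf n).2⟩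

/-- Choquet's capacitability theorem for the `𝒦`-analytic set `X`. The bounds `m k` on the
branches are chosen one coordinate at a time, keeping the capacity within `ε` of `I X`. -/
theorem IsSuslin.exists_antitone_lt_add (hempty : ∅ ∈ 𝒦)
    (hunion : ∀ s ∈ 𝒦, ∀ t ∈ 𝒦, s ∪ t ∈ 𝒦) {I : Set α → ℝ≥0∞} (hI_mono : Monotone I)
    (hI_iUnion : ∀ Y : ℕ → Set α, Monotone Y → I (⋃ n, Y n) = ⨆ n, I (Y n)) {X : Set α}
    (hX : IsSuslin 𝒦 X) (hIX : I X ≠ ⊤) {ε : ℝ≥0∞} (hε : 0 < ε) :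
    ∃ L : ℕ → Set α, (∀ k, L k ∈ 𝒦) ∧ Antitone L ∧ ⋂ k, L k ⊆ X ∧ ∀ k, I X < I (L k) + ε := by
  obtain ⟨C, hC𝒦, hC, hanti, rfl⟩ := hX
  set Y : Set (ℕ → ℕ) → Set α := fun Φ => ⋃ f ∈ Φ, ⋂ n, C f n
  have hY_univ : Y univ = ⋃ f, ⋂ n, C f n := by simp [Y]
  have hstep Φ k (h : I (Y univ) < I (Y Φ) + ε) :
      ∃ j, I (Y univ) < I (Y (Φ ∩ {f | f k ≤ j})) + ε := by
    have hY : Y Φ = ⋃ j, Y (Φ ∩ {f | f k ≤ j}) := by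
      ext x
      simp only [Y, mem_iUnion, mem_inter_iff, mem_ofPred_eq, exists_prop]
      exact ⟨fun ⟨f, hf, hx⟩ => ⟨f k, f, ⟨hf, le_rfl⟩, hx⟩, fun ⟨_, f, hf, hx⟩ => ⟨f, hf.1, hx⟩⟩
    have hmono : Monotone fun j => Y (Φ ∩ {f | f k ≤ j}) := fun j j' hj =>
      biUnion_subset_biUnion_left (inter_subset_inter_right _ fun f hf => le_trans hf hj)
    rwa [hY, hI_iUnion _ hmono, ENNReal.iSup_add, lt_iSup_iff] at h
  choose! j hj using hstep
  let Φ : ℕ → Set (ℕ → ℕ) := fun k => Nat.rec univ (fun k Φk => Φk ∩ {f | f k ≤ j Φk k}) k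
  set m : ℕ → ℕ := fun k => j (Φ k) k
  have hΦ_anti : Antitone Φ := antitone_nat_of_succ_le fun k => inter_subset_left
  have hΦ_bdd k : Φ (k + 1) ⊆ {f | ∀ i ≤ k, f i ≤ m i} := fun f hf i hi =>
    (hΦ_anti (Nat.succ_le_succ hi) hf).2
  have hΦ_cap k : I (Y univ) < I (Y (Φ k)) + ε := by
    induction k with
    | zero => exact ENNReal.lt_add_right (hY_univ ▸ hIX) hε.ne'
    | succ k ih => exact hj _ _ ih
  refine ⟨fun k => ⋃ f ∈ Φ (k + 1), C f k,
    fun k => biUnion_mem_of_subset_bounded hempty hunion hC𝒦 hC m k (hΦ_bdd k),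
    fun k l hkl => biUnion_mono (hΦ_anti (Nat.succ_le_succ hkl))
      fun f _ => antitone_nat_of_succ_le (hanti f) hkl, fun x hx => ?_, fun k => ?_⟩
  · obtain ⟨f, hf⟩ := exists_forall_mem_of_forall_exists_bounded hC hanti m fun k => by
      obtain ⟨f, hf, hxf⟩ := mem_iUnion₂.1 (mem_iInter.1 hx k)
      exact ⟨f, hΦ_bdd k hf, hxf⟩
    exact mem_iUnion.2 ⟨f, mem_iInter.2 hf⟩
  · rw [← hY_univ]
    exact (hΦ_cap (k + 1)).trans_le (add_le_add (hI_mono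
      (biUnion_mono subset_rfl fun f _ => iInter_subset _ k)) le_rfl)

end Choquet

section Rays

variable {F : MeasurableSpace Ω} {𝔽 : Filtration ℝ≥0 F} {τ ρ : Ω → ℝ≥0∞}

theorem IsAccessibleTime.isSuslin_rayFrom (hτ : IsAccessibleTime 𝔽 τ) :
    IsSuslin (AccessiblePaving 𝔽) (rayFrom τ) := by
  have h : rayFrom τ = ⋃ M : ℕ, stInterval τ fun _ => ((M : ℝ≥0) : ℝ≥0∞) := by
    ext ⟨ω, t⟩
    simp only [rayFrom, stInterval, mem_ofPred_eq, mem_iUnion]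
    refine ⟨fun h => ?_, fun ⟨_, h, _⟩ => h⟩
    obtain ⟨M, hM⟩ := exists_nat_ge t
    exact ⟨M, h, by exact_mod_cast hM⟩
  rw [h]
  exact .iUnion fun M => .of_mem (AccessiblePaving.stInterval_mem hτ
    (isStoppingTime_const 𝔽 _) fun _ => ENNReal.coe_ne_top)

/-- On `{0 < ρ}`, the complement `⟦0, ρ⟦` is the union of the intervals `⟦0, ρs k⟧` given by
an announcing sequence; on `{ρ = 0}` it is empty, whence the restriction of `0` to `{0 < ρ}`. -/
theorem IsPredTime.isSuslin_compl_rayFrom (hρ : IsPredTime 𝔽 ρ) :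
    IsSuslin (AccessiblePaving 𝔽) (rayFrom ρ)ᶜ := by
  obtain ⟨hρ_stop, ρs, hρs, hρs_fin, -, hρs_lt, hρs_mono, hρs_lim⟩ := hρ
  set z := restrictTime (fun _ => 0) {ω | 0 < ρ ω}
  have hz : IsAccessibleTime 𝔽 z := by
    refine isPredTime_zero.isAccessibleTime.restrictTime ?_
    show MeasurableSet[(isStoppingTime_const 𝔽 (0 : ℝ≥0)).measurableSpace] _
    rw [IsStoppingTime.measurableSpace_const]
    have h : {ω | 0 < ρ ω} = {ω | ρ ω ≤ (0 : ℝ≥0)}ᶜ := by ext; simp [pos_iff_ne_zero]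
    exact h ▸ (hρ_stop 0).compl
  have h : (rayFrom ρ)ᶜ = ⋃ k, stInterval z (ρs k) := by
    ext ⟨ω, t⟩
    simp only [rayFrom, stInterval, mem_compl_iff, mem_ofPred_eq, not_le, mem_iUnion]
    constructor
    · intro h
      have hpos : 0 < ρ ω := lt_of_le_of_lt zero_le h
      have hsup : ⨆ k, ρs k ω = ρ ω :=
        tendsto_nhds_unique (tendsto_atTop_iSup (hρs_mono ω)) (hρs_lim ω)
      obtain ⟨k, hk⟩ := lt_iSup_iff.1 (hsup ▸ h)
      exact ⟨k, by simp [z, restrictTime_of_mem (B := {ω | 0 < ρ ω}) hpos], hk.le⟩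
    · rintro ⟨k, hz, hk⟩
      by_cases hpos : 0 < ρ ω
      · exact hk.trans_lt (hρs_lt k ω hpos)
      · have hzω : z ω = ⊤ := restrictTime_of_notMem (B := {ω | 0 < ρ ω}) hpos
        exact absurd (hzω ▸ hz) (not_le.2 ENNReal.coe_lt_top)
  rw [h]
  exact .iUnion fun k => .of_mem (AccessiblePaving.stInterval_mem hz (hρs k) fun ω =>
    (hρs_fin k ω).ne)

/-- With `ρ m` predictable times covering the graph of `τ`, `(rayFrom τ)ᶜ` is the
intersection over `m` of `(rayFrom (ρ m))ᶜ ∪ rayFrom w_m`, where `w_m` is the restriction of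
`ρ m` to `{ρ m ≠ τ}`. -/
theorem IsAccessibleTime.isSuslin_compl_rayFrom (hτ : IsAccessibleTime 𝔽 τ) :
    IsSuslin (AccessiblePaving 𝔽) (rayFrom τ)ᶜ := by
  obtain ⟨hτ_stop, ρ, hρ, hcover⟩ := hτ
  set w : ℕ → Ω → ℝ≥0∞ := fun m => _root_.restrictTime (ρ m) {ω | ρ m ω = τ ω}ᶜ
  have hw m : IsAccessibleTime 𝔽 (w m) := (hρ m).isAccessibleTime.restrictTime
    ((hρ m).1.isStoppingTime.measurableSet_eq_stopping_time hτ_stop.isStoppingTime).compl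
  have h : (rayFrom τ)ᶜ = ⋂ m, ((rayFrom (ρ m))ᶜ ∪ rayFrom (w m)) := by
    ext ⟨ω, t⟩
    simp only [rayFrom, mem_compl_iff, mem_ofPred_eq, not_le, mem_iInter, mem_union]
    constructor
    · intro h m
      by_cases hm : ρ m ω = τ ω
      · exact Or.inl (hm ▸ h)
      · have hwω : w m ω = ρ m ω := restrictTime_of_mem (B := {ω | ρ m ω = τ ω}ᶜ) hm
        exact hwω ▸ lt_or_ge _ _
    · intro h
      obtain hτω | hτω := eq_or_ne (τ ω) ⊤
      · exact hτω ▸ ENNReal.coe_lt_top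
      obtain ⟨s, hs⟩ := WithTop.ne_top_iff_exists.1 hτω
      obtain ⟨m, hm⟩ := mem_iUnion.1 (hcover (show (ω, s) ∈ graph τ from hs.symm))
      have hm : ρ m ω = τ ω := (hm : ρ m ω = s).trans hs
      have hwω : w m ω = ⊤ := restrictTime_of_notMem (B := {ω | ρ m ω = τ ω}ᶜ) (not_not.2 hm)
      rw [← hm]
      exact (h m).resolve_right (hwω ▸ not_le.2 ENNReal.coe_lt_top)
  rw [h]
  exact .iInter_nat (fun _ hs _ ht => AccessiblePaving.inter_mem hs ht) fun m =>
    (hρ m).isSuslin_compl_rayFrom.union (hw m).isSuslin_rayFrom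

theorem isSuslin_of_measurableSet_accessibleSigma {A : Set (Ω × ℝ≥0)}
    (hA : MeasurableSet[accessibleSigma 𝔽] A) : IsSuslin (AccessiblePaving 𝔽) A := by
  suffices IsSuslin (AccessiblePaving 𝔽) A ∧ IsSuslin (AccessiblePaving 𝔽) Aᶜ from this.1
  induction A, hA using MeasurableSpace.generateFrom_induction with
  | hC _ h _ =>
    obtain ⟨τ, hτ, rfl⟩ := h
    exact ⟨hτ.isSuslin_rayFrom, hτ.isSuslin_compl_rayFrom⟩
  | empty =>
    have huniv : (∅ : Set (Ω × ℝ≥0))ᶜ = rayFrom fun _ => 0 := by ext; simp [rayFrom]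
    exact ⟨.of_mem .empty, huniv ▸ isPredTime_zero.isAccessibleTime.isSuslin_rayFrom⟩
  | compl _ _ ih =>
    rw [compl_compl]
    exact ih.symm
  | iUnion _ _ ih =>
    rw [compl_iUnion]
    exact ⟨.iUnion fun n => (ih n).1,
      .iInter_nat (fun _ hs _ ht => AccessiblePaving.inter_mem hs ht) fun n => (ih n).2⟩

end Rays

theorem exists_antitone_accessiblePaving_lt_add {F : MeasurableSpace Ω} {𝔽 : Filtration ℝ≥0 F}
    (P : Measure Ω) [IsFiniteMeasure P] {A : Set (Ω × ℝ≥0)}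
    (hA : MeasurableSet[accessibleSigma 𝔽] A) {ε : ℝ≥0∞} (hε : 0 < ε) :
    ∃ S : ℕ → Set (Ω × ℝ≥0), (∀ n, S n ∈ AccessiblePaving 𝔽) ∧ Antitone S ∧ ⋂ n, S n ⊆ A ∧
      ∀ n, P (projOmega A) < P (projOmega (S n)) + ε := by
  refine (isSuslin_of_measurableSet_accessibleSigma hA).exists_antitone_lt_add
    .empty (fun _ hs _ ht => AccessiblePaving.union_mem hs ht)
    (I := fun S => P (projOmega S)) (fun _ _ h => measure_mono (image_mono h)) (fun Y hY => ?_)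
    (measure_ne_top P _) hε
  simpa only [projOmega, image_iUnion] using Monotone.measure_iUnion fun _ _ h => image_mono (hY h)

/-- Accessible Section Theorem: for every accessible set `A` and
`ε > 0` there is an accessible time `τ` with graph inside `A` and
`ℙ*(π_Ω(A)) − ℙ({τ < ∞}) ≤ ε`. -/
theorem accessible_section {Ω : Type*} {F : MeasurableSpace Ω}
    (𝔽 : Filtration ℝ≥0 F) (P : Measure Ω) [IsProbabilityMeasure P]
    (A : Set (Ω × ℝ≥0)) (hA : MeasurableSet[accessibleSigma 𝔽] A)
    (ε : ℝ≥0∞) (hε : 0 < ε) :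
    ∃ τ : Ω → ℝ≥0∞, IsAccessibleTime 𝔽 τ ∧ graph τ ⊆ A ∧
      pstar P (projOmega A) - P {ω | τ ω < ⊤} ≤ ε := by
  obtain ⟨S, hS, hS_anti, hSA, hPS⟩ := exists_antitone_accessiblePaving_lt_add P hA hε
  obtain ⟨τ, hτ, hτS, hSτ⟩ := exists_isAccessibleTime_graph_subset_iInter hS hS_anti
  refine ⟨τ, hτ, hτS.trans hSA, ?_⟩
  have hproj_anti : Antitone fun n => projOmega (S n) := fun _ _ h => image_mono (hS_anti h)
  rw [pstar, ← measure_eq_iInf, tsub_le_iff_left]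
  calc P (projOmega A) ≤ (⨅ n, P (projOmega (S n))) + ε := by
        rw [ENNReal.iInf_add]
        exact le_iInf fun n => (hPS n).le
    _ = P (⋂ n, projOmega (S n)) + ε := by
        rw [hproj_anti.measure_iInter (fun n => (AccessiblePaving.measurableSet_projOmega
          (hS n)).nullMeasurableSet) ⟨0, measure_ne_top P _⟩]
    _ ≤ P {ω | τ ω < ⊤} + ε := by gcongr
end

section
/- Let (Ω, F) be a measurable space with a filtration (F_t)_{t∈ℝ₊} satisfying ⋁_t F_t ⊆ F. If ρ is a predictable time and τ is a stopping time, then the function ρ_{\{ρ ≤ τ\}}, equal to ρ on {ρ ≤ τ} and to ∞ on its complement, is a predictable time. -/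
open MeasureTheory Set
open scoped NNReal ENNReal


variable {Ω : Type*}

open scoped Classical in
lemma measSet_lt_and_le {F : MeasurableSpace Ω} (𝔽 : Filtration ℝ≥0 F)
    {a b : Ω → ℝ≥0∞} (ha : IsStopTime 𝔽 a) (hb : IsStopTime 𝔽 b) (t : ℝ≥0) :
    MeasurableSet[𝔽 t] {ω | b ω < a ω ∧ a ω ≤ (t : ℝ≥0∞)} := by
  have hset : {ω | b ω < a ω ∧ a ω ≤ (t : ℝ≥0∞)} =
      ⋃ q : ℚ, if (Real.toNNReal q : ℝ≥0) ≤ t then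
        ({ω | b ω ≤ ((Real.toNNReal q : ℝ≥0) : ℝ≥0∞)} ∩
          {ω | a ω ≤ ((Real.toNNReal q : ℝ≥0) : ℝ≥0∞)}ᶜ ∩ {ω | a ω ≤ (t : ℝ≥0∞)})
      else ∅ := by
    ext ω
    simp only [mem_iUnion, mem_setOf_eq]
    constructor
    · rintro ⟨hba, hat⟩
      obtain ⟨q, _, hbq, hqa⟩ := ENNReal.lt_iff_exists_rat_btwn.1 hba
      refine ⟨q, ?_⟩
      have hqt : (Real.toNNReal q : ℝ≥0) ≤ t := by
        have := hqa.le.trans hat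
        exact_mod_cast this
      rw [if_pos hqt]
      exact ⟨⟨hbq.le, fun h => absurd (h.trans_lt hqa) (lt_irrefl _)⟩, hat⟩
    · rintro ⟨q, hq⟩
      by_cases hqt : (Real.toNNReal q : ℝ≥0) ≤ t
      · rw [if_pos hqt] at hq
        obtain ⟨⟨hbq, hqa⟩, hat⟩ := hq
        exact ⟨hbq.trans_lt (lt_of_not_ge hqa), hat⟩
      · rw [if_neg hqt] at hq
        exact absurd hq (notMem_empty ω)
  rw [hset]
  refine MeasurableSet.iUnion fun q => ?_
  by_cases hqt : (Real.toNNReal q : ℝ≥0) ≤ t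
  · rw [if_pos hqt]
    exact (((𝔽.mono hqt _ (hb _)).inter (𝔽.mono hqt _ (ha _)).compl).inter (ha t))
  · rw [if_neg hqt]; exact @MeasurableSet.empty _ (𝔽 t)

lemma measSet_le_and_le {F : MeasurableSpace Ω} (𝔽 : Filtration ℝ≥0 F)
    {a b : Ω → ℝ≥0∞} (ha : IsStopTime 𝔽 a) (hb : IsStopTime 𝔽 b) (t : ℝ≥0) :
    MeasurableSet[𝔽 t] {ω | a ω ≤ b ω ∧ a ω ≤ (t : ℝ≥0∞)} := by
  have : {ω | a ω ≤ b ω ∧ a ω ≤ (t : ℝ≥0∞)} =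
      {ω | a ω ≤ (t : ℝ≥0∞)} \ {ω | b ω < a ω ∧ a ω ≤ (t : ℝ≥0∞)} := by
    ext ω
    simp only [mem_setOf_eq, mem_diff]
    constructor
    · rintro ⟨hab, hat⟩
      exact ⟨hat, fun h => absurd hab (not_le.2 h.1)⟩
    · rintro ⟨hat, hn⟩
      exact ⟨not_lt.1 fun hba => hn ⟨hba, hat⟩, hat⟩
  rw [this]
  exact (ha t).diff (measSet_lt_and_le 𝔽 ha hb t)

open scoped Classical in
/-- if `ρ` is a predictable time and `τ` a stopping time, then the
restriction `ρ_{ρ ≤ τ}` (equal to `ρ` on `{ρ ≤ τ}` and `∞` elsewhere) is a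
predictable time. -/
theorem isPredTime_restrict_le {Ω : Type*} {F : MeasurableSpace Ω}
    (𝔽 : Filtration ℝ≥0 F) (ρ τ : Ω → ℝ≥0∞)
    (hρ : IsPredTime 𝔽 ρ) (hτ : IsStopTime 𝔽 τ) :
    IsPredTime 𝔽 (fun ω => if ρ ω ≤ τ ω then ρ ω else ⊤) := by
  obtain ⟨hρst, ρs, hst, hfin, hle, hlt, hmono, htend⟩ := hρ
  constructor
  · -- σ is a stopping time
    intro t
    have hset : {ω | (if ρ ω ≤ τ ω then ρ ω else ⊤) ≤ (t : ℝ≥0∞)} =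
        {ω | ρ ω ≤ τ ω ∧ ρ ω ≤ (t : ℝ≥0∞)} := by
      ext ω
      simp only [mem_setOf_eq]
      split_ifs with h
      · exact ⟨fun ht => ⟨h, ht⟩, fun ht => ht.2⟩
      · simp [h, (ENNReal.coe_lt_top (r := t)).ne']
    rw [hset]
    exact measSet_le_and_le 𝔽 hρst hτ t
  · refine ⟨fun n ω => if ρs n ω ≤ τ ω then ρs n ω ⊓ (n : ℝ≥0∞) else (n : ℝ≥0∞),
      fun n t => ?_, fun n ω => ?_, fun n ω => ?_, fun n ω h0 => ?_,
      fun ω => ?_, fun ω => ?_⟩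
    · -- stopping times
      dsimp only
      by_cases hnt : ((n : ℝ≥0) : ℝ≥0∞) ≤ (t : ℝ≥0∞)
      · have : {ω | (if ρs n ω ≤ τ ω then ρs n ω ⊓ (n : ℝ≥0∞) else (n : ℝ≥0∞)) ≤ (t : ℝ≥0∞)}
            = univ := by
          ext ω
          simp only [mem_setOf_eq, mem_univ, iff_true]
          split_ifs
          · exact le_trans (min_le_right _ _) (by exact_mod_cast hnt)
          · exact_mod_cast hnt
        rw [this]
        exact MeasurableSet.univ
      · have hnt' : (t : ℝ≥0∞) < ((n : ℝ≥0) : ℝ≥0∞) := lt_of_not_ge hnt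
        have : {ω | (if ρs n ω ≤ τ ω then ρs n ω ⊓ (n : ℝ≥0∞) else (n : ℝ≥0∞)) ≤ (t : ℝ≥0∞)}
            = {ω | ρs n ω ≤ τ ω ∧ ρs n ω ≤ (t : ℝ≥0∞)} := by
          ext ω
          simp only [mem_setOf_eq]
          split_ifs with h
          · constructor
            · intro hmin
              refine ⟨h, ?_⟩
              rcases min_le_iff.1 hmin with h1 | h1
              · exact_mod_cast h1
              · exact absurd (by exact_mod_cast h1) (not_le.2 hnt')
            · exact fun hh => le_trans (min_le_left _ _) hh.2
          · constructor
            · intro hn; exact absurd hn (by exact_mod_cast hnt)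
            · exact fun hh => absurd hh.1 h
        rw [this]
        exact measSet_le_and_le 𝔽 (hst n) hτ t
    · -- finite
      dsimp only
      split_ifs
      · exact lt_of_le_of_lt (min_le_right _ _) (by exact_mod_cast ENNReal.coe_lt_top)
      · exact (by exact_mod_cast ENNReal.coe_lt_top : ((n : ℝ≥0) : ℝ≥0∞) < ⊤)
    · -- ≤ σ
      dsimp only
      by_cases h : ρ ω ≤ τ ω
      · have hρτ : ρs n ω ≤ τ ω := (hle n ω).trans h
        simp only [if_pos h, if_pos hρτ]
        exact le_trans (min_le_left _ _) (hle n ω)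
      · simp only [if_neg h]
        exact le_top
    · -- < σ on {σ > 0}
      dsimp only at h0 ⊢
      by_cases h : ρ ω ≤ τ ω
      · simp only [if_pos h] at h0 ⊢
        have hρτ : ρs n ω ≤ τ ω := (hle n ω).trans h
        rw [if_pos hρτ]
        exact lt_of_le_of_lt (min_le_left _ _) (hlt n ω h0)
      · simp only [if_neg h]
        split_ifs
        · exact lt_of_le_of_lt (min_le_right _ _) (by exact_mod_cast ENNReal.coe_lt_top)
        · exact (by exact_mod_cast ENNReal.coe_lt_top : ((n : ℝ≥0) : ℝ≥0∞) < ⊤)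
    · -- monotone
      dsimp only
      refine monotone_nat_of_le_succ fun n => ?_
      have hcast : ((n : ℕ) : ℝ≥0∞) ≤ ((n + 1 : ℕ) : ℝ≥0∞) := by
        exact_mod_cast Nat.le_succ n
      by_cases h1 : ρs (n + 1) ω ≤ τ ω
      · have h0 : ρs n ω ≤ τ ω := le_trans (hmono ω (Nat.le_succ n)) h1
        simp only [if_pos h0, if_pos h1]
        exact min_le_min (hmono ω (Nat.le_succ n)) hcast
      · by_cases h0 : ρs n ω ≤ τ ω
        · simp only [if_pos h0, if_neg h1]
          exact le_trans (min_le_right _ _) hcast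
        · simp only [if_neg h0, if_neg h1]
          exact hcast
    · -- tendsto
      dsimp only
      by_cases h : ρ ω ≤ τ ω
      · simp only [if_pos h]
        have hall : ∀ n, ρs n ω ≤ τ ω := fun n => (hle n ω).trans h
        have : (fun n => if ρs n ω ≤ τ ω then ρs n ω ⊓ (n : ℝ≥0∞) else (n : ℝ≥0∞))
            = fun n => ρs n ω ⊓ (n : ℝ≥0∞) := by
          funext n; rw [if_pos (hall n)]
        rw [this]
        have := (htend ω).min (ENNReal.tendsto_nat_nhds_top)
        simpa using this
      · simp only [if_neg h]
        have hτρ : τ ω < ρ ω := lt_of_not_ge h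
        have hev : ∀ᶠ n in Filter.atTop, τ ω < ρs n ω :=
          (htend ω).eventually (eventually_gt_nhds hτρ)
        refine Filter.Tendsto.congr' ?_ (ENNReal.tendsto_nat_nhds_top)
        filter_upwards [hev] with n hn
        rw [if_neg (not_le.2 hn)]
end

section
/- Let (Ω, F) be a measurable space with a filtration (F_t)_{t∈ℝ₊} satisfying ⋁_t F_t ⊆ F. If (ρ_n)_{n∈ℕ} is a sequence of predictable times, then sup_{n∈ℕ} ρ_n is a predictable time. -/
open MeasureTheory Set
open scoped NNReal ENNReal


variable {Ω : Type*}

open Filter Topology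

/-!
Announce each `ρₙ` by `(σₙₖ)ₖ` and take the diagonal maxima `τₖ = max_{n ≤ k} σₙₖ`. Finite maxima
and countable suprema of stopping times are stopping times, each `τₖ` is finite, and `τₖ` stays
strictly below `sup ρₙ` when that is positive (the `ρₙ = 0` terms contribute `σₙₖ = 0`). The
diagonal sequence is nondecreasing and exhausts `sup_{n,k} σₙₖ = sup ρₙ`.
-/

def diagSup {α : Type*} [SemilatticeSup α] [OrderBot α] (f : ℕ → ℕ → α) (k : ℕ) : α :=
  (Finset.range (k + 1)).sup fun n => f n k

section DiagSup

variable {α : Type*}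

theorem diagSup_apply {ι : Type*} {β : ι → Type*} [∀ i, SemilatticeSup (β i)]
    [∀ i, OrderBot (β i)] (f : ℕ → ℕ → ∀ i, β i) (k : ℕ) (i : ι) :
    diagSup f k i = diagSup (fun n k => f n k i) k :=
  Finset.sup_apply _ _ _

theorem monotone_diagSup [SemilatticeSup α] [OrderBot α] {f : ℕ → ℕ → α}
    (hf : ∀ n, Monotone (f n)) : Monotone (diagSup f) := fun k l hkl =>
  Finset.sup_le fun n hn => (hf n hkl).trans <|
    Finset.le_sup (f := fun m => f m l) (Finset.range_subset_range.2 (by omega) hn)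

theorem iSup_diagSup [CompleteLattice α] {f : ℕ → ℕ → α} (hf : ∀ n, Monotone (f n)) :
    ⨆ k, diagSup f k = ⨆ n, ⨆ k, f n k := by
  refine le_antisymm (iSup_le fun k => Finset.sup_le fun n _ => le_iSup₂ (f := f) n k) ?_
  refine iSup₂_le fun n k => ?_
  calc f n k ≤ f n (max n k) := hf n (le_max_right n k)
    _ ≤ diagSup f (max n k) :=
      Finset.le_sup (f := fun m => f m (max n k)) (Finset.mem_range.2 (by omega))
    _ ≤ ⨆ k, diagSup f k := le_iSup _ _

end DiagSup

section StopTime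

variable {F : MeasurableSpace Ω} {𝔽 : Filtration ℝ≥0 F}

theorem isStopTime_iSup {ι : Sort*} [Countable ι] {τ : ι → Ω → ℝ≥0∞}
    (hτ : ∀ i, IsStopTime 𝔽 (τ i)) : IsStopTime 𝔽 fun ω => ⨆ i, τ i ω := by
  intro t
  simp only [iSup_le_iff, ofPred_forall]
  exact MeasurableSet.iInter fun i => hτ i t

theorem isStopTime_finset_sup {ι : Type*} (s : Finset ι) {τ : ι → Ω → ℝ≥0∞}
    (hτ : ∀ i ∈ s, IsStopTime 𝔽 (τ i)) : IsStopTime 𝔽 (s.sup τ) := by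
  intro t
  simp only [Finset.sup_apply, Finset.sup_le_iff, ofPred_forall]
  exact MeasurableSet.biInter s.countable_toSet fun i hi => hτ i hi t

structure Announces (𝔽 : Filtration ℝ≥0 F) (σ : ℕ → Ω → ℝ≥0∞) (ρ : Ω → ℝ≥0∞) : Prop where
  isStopTime : ∀ n, IsStopTime 𝔽 (σ n)
  lt_top : ∀ n ω, σ n ω < ⊤
  le : ∀ n ω, σ n ω ≤ ρ ω
  lt_of_pos : ∀ n ω, 0 < ρ ω → σ n ω < ρ ω
  mono : ∀ ω, Monotone fun n => σ n ω
  tendsto : ∀ ω, Tendsto (fun n => σ n ω) atTop (𝓝 (ρ ω))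

theorem isPredTime_iff {ρ : Ω → ℝ≥0∞} :
    IsPredTime 𝔽 ρ ↔ IsStopTime 𝔽 ρ ∧ ∃ σ, Announces 𝔽 σ ρ :=
  and_congr_right fun _ => exists_congr fun _ =>
    ⟨fun ⟨h₁, h₂, h₃, h₄, h₅, h₆⟩ => ⟨h₁, h₂, h₃, h₄, h₅, h₆⟩,
      fun h => ⟨h.1, h.2, h.3, h.4, h.5, h.6⟩⟩

namespace Announces

variable {σ : ℕ → Ω → ℝ≥0∞} {ρ : Ω → ℝ≥0∞}

theorem iSup_eq (h : Announces 𝔽 σ ρ) (ω : Ω) : ⨆ n, σ n ω = ρ ω :=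
  tendsto_nhds_unique (tendsto_atTop_iSup (h.mono ω)) (h.tendsto ω)

theorem lt_of_le_of_pos (h : Announces 𝔽 σ ρ) {n : ℕ} {ω : Ω} {r : ℝ≥0∞} (hρr : ρ ω ≤ r)
    (hr : 0 < r) : σ n ω < r := by
  rcases (zero_le : 0 ≤ ρ ω).eq_or_lt with hρ | hρ
  · exact ((h.le n ω).trans hρ.ge).trans_lt hr
  · exact (h.lt_of_pos n ω hρ).trans_le hρr

theorem diagSup_iSup {σ : ℕ → ℕ → Ω → ℝ≥0∞} {ρ : ℕ → Ω → ℝ≥0∞}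
    (h : ∀ n, Announces 𝔽 (σ n) (ρ n)) :
    Announces 𝔽 (diagSup σ) fun ω => ⨆ n, ρ n ω where
  isStopTime k := isStopTime_finset_sup _ fun n _ => (h n).isStopTime k
  lt_top k ω := by
    rw [diagSup_apply, diagSup, Finset.sup_lt_iff bot_lt_top]
    exact fun n _ => (h n).lt_top k ω
  le k ω := by
    rw [diagSup_apply]
    exact Finset.sup_le fun n _ => ((h n).le k ω).trans (le_iSup (fun n => ρ n ω) n)
  lt_of_pos k ω hpos := by
    rw [diagSup_apply, diagSup, Finset.sup_lt_iff hpos]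
    exact fun n _ => (h n).lt_of_le_of_pos (le_iSup (fun n => ρ n ω) n) hpos
  mono ω := by
    simp only [diagSup_apply]
    exact monotone_diagSup fun n => (h n).mono ω
  tendsto ω := by
    have hlim := tendsto_atTop_iSup (monotone_diagSup fun n => (h n).mono ω)
    simp only [iSup_diagSup fun n => (h n).mono ω, fun n => (h n).iSup_eq ω] at hlim
    simpa only [diagSup_apply] using hlim

end Announces

end StopTime

/-- the pointwise supremum of a sequence of predictable times is a
predictable time. -/
theorem isPredTime_iSup {Ω : Type*} {F : MeasurableSpace Ω}
    (𝔽 : Filtration ℝ≥0 F) (ρs : ℕ → Ω → ℝ≥0∞)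
    (hρs : ∀ n, IsPredTime 𝔽 (ρs n)) :
    IsPredTime 𝔽 (fun ω => ⨆ n, ρs n ω) := by
  choose hstop σ hσ using fun n => isPredTime_iff.1 (hρs n)
  exact isPredTime_iff.2 ⟨isStopTime_iSup hstop, diagSup σ, Announces.diagSup_iSup hσ⟩
end

section
/- Let (Ω, F) be a measurable space with a filtration (F_t)_{t∈ℝ₊} satisfying ⋁_t F_t ⊆ F. If τ is a stopping time and S ⊆ Ω×ℝ₊ is progressively measurable, then the function σ : Ω → [0,∞] defined by σ(ω) = τ(ω) if (ω, τ(ω)) ∈ S and τ(ω) < ∞, and σ(ω) = ∞ otherwise (i.e. the function whose graph is ⟦τ⟧ ∩ S), is a stopping time. -/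
open MeasureTheory Set
open scoped NNReal ENNReal


variable {Ω : Type*}

/-- A progressively measurable subset of `Ω × ℝ₊`: for every `t`, the part of `S` up
to time `t` is measurable for the product σ-algebra `F_t ⊗ B(ℝ₊)` (equivalently,
`S ∩ (Ω × [0,t]) ∈ F_t ⊗ B([0,t])`). -/
def IsProgressiveSet {Ω : Type*} {F : MeasurableSpace Ω} (𝔽 : Filtration ℝ≥0 F)
    (S : Set (Ω × ℝ≥0)) : Prop :=
  ∀ t : ℝ≥0,
    MeasurableSet[(𝔽 t).prod (inferInstance : MeasurableSpace ℝ≥0)]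
      (S ∩ {p : Ω × ℝ≥0 | p.2 ≤ t})

open scoped Classical in
/-- if `τ` is a stopping time and `S` is progressively measurable, then
the function with graph `⟦τ⟧ ∩ S` (equal to `τ(ω)` when `τ(ω) < ∞` and
`(ω, τ(ω)) ∈ S`, and to `∞` otherwise) is a stopping time. -/
theorem isStopTime_restrict_progressive {Ω : Type*} {F : MeasurableSpace Ω}
    (𝔽 : Filtration ℝ≥0 F) (τ : Ω → ℝ≥0∞)
    (hτ : IsStopTime 𝔽 τ) (S : Set (Ω × ℝ≥0)) (hS : IsProgressiveSet 𝔽 S) :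
    IsStopTime 𝔽
      (fun ω => if τ ω < ⊤ ∧ (ω, (τ ω).toNNReal) ∈ S then τ ω else ⊤) := by
  intro t
  -- the truncated stopping time min (τ ω) t is 𝔽 t-measurable
  have hmin : Measurable[𝔽 t] fun ω => min (τ ω) (t : ℝ≥0∞) := by
    apply measurable_of_Iic
    intro x
    by_cases hx : (t : ℝ≥0∞) ≤ x
    · have : (fun ω => min (τ ω) (t : ℝ≥0∞)) ⁻¹' Set.Iic x = Set.univ := by
        ext ω; simp [min_le_iff, hx]
      rw [this]; exact MeasurableSet.univ
    · push_neg at hx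
      have hxt : x ≠ ⊤ := fun h => by simp [h] at hx
      have hxe : x = (x.toNNReal : ℝ≥0∞) := (ENNReal.coe_toNNReal hxt).symm
      have : (fun ω => min (τ ω) (t : ℝ≥0∞)) ⁻¹' Set.Iic x = {ω | τ ω ≤ x} := by
        ext ω
        simp only [Set.mem_preimage, Set.mem_Iic, Set.mem_setOf_eq, min_le_iff]
        constructor
        · rintro (h | h)
          · exact h
          · exact absurd (lt_of_lt_of_le hx h) (lt_irrefl _)
        · exact fun h => Or.inl h
      rw [this, hxe]
      exact 𝔽.mono (by exact_mod_cast le_of_lt (hxe ▸ hx)) _ (hτ x.toNNReal)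
  have hg : Measurable[𝔽 t] fun ω => (min (τ ω) (t : ℝ≥0∞)).toNNReal :=
    ENNReal.measurable_toNNReal.comp hmin
  have hφ : @Measurable Ω (Ω × ℝ≥0) (𝔽 t) ((𝔽 t).prod inferInstance)
      (fun ω => (ω, (min (τ ω) (t : ℝ≥0∞)).toNNReal)) := by
    letI : MeasurableSpace Ω := 𝔽 t
    exact Measurable.prodMk measurable_id hg
  have key : MeasurableSet[𝔽 t]
      ((fun ω => (ω, (min (τ ω) (t : ℝ≥0∞)).toNNReal)) ⁻¹' (S ∩ {p | p.2 ≤ t})) :=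
    hφ (hS t)
  have heq : {ω | (if τ ω < ⊤ ∧ (ω, (τ ω).toNNReal) ∈ S then τ ω else ⊤) ≤ (t : ℝ≥0∞)}
      = {ω | τ ω ≤ (t : ℝ≥0∞)} ∩
        ((fun ω => (ω, (min (τ ω) (t : ℝ≥0∞)).toNNReal)) ⁻¹' (S ∩ {p | p.2 ≤ t})) := by
    ext ω
    simp only [Set.mem_setOf_eq, Set.mem_inter_iff, Set.mem_preimage]
    constructor
    · intro h
      split_ifs at h with hc
      · have htle : τ ω ≤ (t : ℝ≥0∞) := h
        have hmin' : min (τ ω) (t : ℝ≥0∞) = τ ω := min_eq_left htle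
        refine ⟨htle, ?_, ?_⟩
        · rw [hmin']; exact hc.2
        · show ((min (τ ω) (t : ℝ≥0∞)).toNNReal : ℝ≥0) ≤ t
          rw [hmin']
          have := ENNReal.toNNReal_le_toNNReal (ne_top_of_lt hc.1) (by simp : (t:ℝ≥0∞) ≠ ⊤)
          simpa using this.mpr htle
      · exact absurd h (by simp)
    · rintro ⟨htle, hmem, -⟩
      have hlt : τ ω < ⊤ := lt_of_le_of_lt htle (by simp)
      have hmin' : min (τ ω) (t : ℝ≥0∞) = τ ω := min_eq_left htle
      rw [hmin'] at hmem
      rw [if_pos ⟨hlt, hmem⟩]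
      exact htle
  rw [show {ω | (fun ω => if τ ω < ⊤ ∧ (ω, (τ ω).toNNReal) ∈ S then τ ω else ⊤) ω ≤ (t : ℝ≥0∞)}
      = {ω | (if τ ω < ⊤ ∧ (ω, (τ ω).toNNReal) ∈ S then τ ω else ⊤) ≤ (t : ℝ≥0∞)} from rfl, heq]
  exact (hτ t).inter key
end
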